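/- arXiv:2511.06643 — 7 statements merged into one kernel-verified Lean document; each statement's English description precedes it below -/
import Mathlib

section
/- Let G be a connected graph with n vertices and m edges, and let q(G) denote the largest eigenvalue of the signless Laplacian matrix Q(G) = D(G) + A(G). Then q(G) ≤ 2m/(n-1) + n - 2. -/
open Matrix SimpleGraph

noncomputable def signlessLaplacian {n : ℕ} (G : SimpleGraph (Fin n)) :
    Matrix (Fin n) (Fin n) ℝ :=
  letI := Classical.decRel G.Adj
  Matrix.diagonal (fun v => (G.degree v : ℝ)) + G.adjMatrix ℝ

def IsMaxEigenvalue {n : ℕ} (M : Matrix (Fin n) (Fin n) ℝ) (q : ℝ) : Prop :=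
  (∃ x : Fin n → ℝ, x ≠ 0 ∧ M.mulVec x = q • x) ∧
  ∀ (μ : ℝ) (x : Fin n → ℝ), x ≠ 0 → M.mulVec x = μ • x → μ ≤ q

/-!
Let `x` be an eigenvector of `Q` for `q` and pick `u` maximising `|x u| / d u`. The eigen-equation
at `u` gives `q ≤ d u + S u / d u`, where `S u` is the sum of the degrees of the neighbours of `u`.
Since every vertex has positive degree, the `n - 1 - d u` vertices outside the closed neighbourhood
of `u` contribute at least `n - 1 - d u` to `2m`, so `S u ≤ 2m - (n - 1)`; trivially also
`S u ≤ d u (n - 1)`. Combining the two bounds with weights `d u` and `n - 1 - d u` yields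
`d u + S u / d u ≤ 2m / (n - 1) + n - 2`.
-/

open Finset

namespace SimpleGraph

variable {V : Type*} [Fintype V] (G : SimpleGraph V) [DecidableRel G.Adj]

theorem sum_degree_neighborFinset_le (u : V) :
    ∑ v ∈ G.neighborFinset u, G.degree v ≤ G.degree u * (Fintype.card V - 1) :=
  calc ∑ v ∈ G.neighborFinset u, G.degree v
      ≤ ∑ _v ∈ G.neighborFinset u, (Fintype.card V - 1) :=
        sum_le_sum fun v _ => Nat.le_sub_one_of_lt (G.degree_lt_card_verts v)
    _ = G.degree u * (Fintype.card V - 1) := by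
        rw [sum_const, card_neighborFinset_eq_degree, smul_eq_mul]

theorem sum_degree_neighborFinset_add_card_sub_one_le (hdeg : ∀ v, 0 < G.degree v) (u : V) :
    ∑ v ∈ G.neighborFinset u, G.degree v + (Fintype.card V - 1) ≤ 2 * #G.edgeFinset := by
  classical
  set R := (G.neighborFinset u)ᶜ.erase u
  have hu : u ∈ (G.neighborFinset u)ᶜ := by simp
  have hcard : #R = Fintype.card V - G.degree u - 1 := by
    rw [card_erase_of_mem hu, card_compl, card_neighborFinset_eq_degree]
  have hR : #R ≤ ∑ v ∈ R, G.degree v :=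
    (card_eq_sum_ones R).trans_le (sum_le_sum fun v _ => hdeg v)
  have hsplit : ∑ v, G.degree v
      = ∑ v ∈ G.neighborFinset u, G.degree v + (G.degree u + ∑ v ∈ R, G.degree v) := by
    rw [← sum_add_sum_compl (G.neighborFinset u), ← add_sum_erase _ _ hu]
  have hlt := G.degree_lt_card_verts u
  rw [← sum_degrees_eq_twice_card_edges, hsplit]
  omega

theorem exists_mul_degree_le_of_mulVec_eq [DecidableEq V] (hdeg : ∀ v, 0 < G.degree v)
    {μ : ℝ} {x : V → ℝ} (hx : x ≠ 0) (hμ : (diagonal (fun v => (G.degree v : ℝ)) + G.adjMatrix ℝ) *ᵥ x = μ • x) :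
    ∃ u, μ * G.degree u ≤ (G.degree u : ℝ) ^ 2 + ∑ v ∈ G.neighborFinset u, (G.degree v : ℝ) := by
  have hdegR : ∀ v, (0 : ℝ) < G.degree v := fun v => Nat.cast_pos.2 (hdeg v)
  obtain ⟨w, hw⟩ := Function.ne_iff.1 hx
  have : Nonempty V := ⟨w⟩
  obtain ⟨u, -, hmax⟩ :=
    exists_max_image univ (fun v => |x v| / (G.degree v : ℝ)) univ_nonempty
  set Y := |x u| / (G.degree u : ℝ)
  have hY : 0 < Y :=
    (div_pos (abs_pos.2 hw) (hdegR w)).trans_le (hmax w (mem_univ w))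
  have hxv : ∀ v, |x v| ≤ Y * G.degree v := fun v =>
    (div_le_iff₀ (hdegR v)).1 (hmax v (mem_univ v))
  have hxu : |x u| = Y * G.degree u := (div_mul_cancel₀ _ (hdegR u).ne').symm
  have heq : (μ - G.degree u) * x u = ∑ v ∈ G.neighborFinset u, x v := by
    have := congrFun hμ u
    simp only [add_mulVec, Pi.add_apply, mulVec_diagonal, adjMatrix_mulVec_apply,
      Pi.smul_apply, smul_eq_mul] at this
    linarith
  have hbound : (μ - G.degree u) * (Y * G.degree u)
      ≤ Y * ∑ v ∈ G.neighborFinset u, (G.degree v : ℝ) :=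
    calc (μ - G.degree u) * (Y * G.degree u) ≤ |(μ - G.degree u) * x u| := by
          rw [abs_mul, hxu]
          exact mul_le_mul_of_nonneg_right (le_abs_self _) (by positivity)
      _ ≤ ∑ v ∈ G.neighborFinset u, |x v| := heq ▸ abs_sum_le_sum_abs _ _
      _ ≤ ∑ v ∈ G.neighborFinset u, Y * G.degree v := sum_le_sum fun v _ => hxv v
      _ = Y * ∑ v ∈ G.neighborFinset u, (G.degree v : ℝ) := (mul_sum ..).symm
  exact ⟨u, by nlinarith⟩

end SimpleGraph

theorem le_two_mul_div_add_sub_one_of_mul_le {μ d S m N : ℝ} (hd : 0 < d) (hdN : d ≤ N)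
    (hS₁ : S ≤ 2 * m - N) (hS₂ : S ≤ d * N) (hμ : μ * d ≤ d ^ 2 + S) :
    μ ≤ 2 * m / N + N - 1 := by
  have hN : 0 < N := hd.trans_le hdN
  rw [← sub_nonneg]
  have key : 0 ≤ (2 * m / N + N - 1 - μ) * d * N := by
    have : 2 * m / N * N = 2 * m := div_mul_cancel₀ _ hN.ne'
    -- `2 m d + (N - 1) d N - (d ^ 2 + S) N = (2 m - N - S) d + (d N - S) (N - d)`
    nlinarith [mul_nonneg (sub_nonneg.2 hS₁) hd.le,
      mul_nonneg (sub_nonneg.2 hS₂) (sub_nonneg.2 hdN)]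
  exact nonneg_of_mul_nonneg_left (nonneg_of_mul_nonneg_left key hN) hd

theorem signlessLaplacian_eq {n : ℕ} (G : SimpleGraph (Fin n)) [DecidableRel G.Adj] :
    signlessLaplacian G = diagonal (fun v => (G.degree v : ℝ)) + G.adjMatrix ℝ := by
  unfold signlessLaplacian
  congr!

theorem stmt0 {n : ℕ} (hn : 2 ≤ n) (G : SimpleGraph (Fin n)) (hconn : G.Connected)
    (m : ℕ) (hm : G.edgeSet.ncard = m)
    (q : ℝ) (hq : IsMaxEigenvalue (signlessLaplacian G) q) :
    q ≤ 2 * (m : ℝ) / ((n : ℝ) - 1) + (n : ℝ) - 2 := by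
  classical
  have : Nontrivial (Fin n) := Fin.nontrivial_iff_two_le.2 hn
  have hdeg : ∀ v, 0 < G.degree v := fun v => hconn.preconnected.degree_pos_of_nontrivial v
  have hedges : #G.edgeFinset = m := by rw [← hm, ← coe_edgeFinset, Set.ncard_coe_finset]
  obtain ⟨⟨x, hx, hxq⟩, -⟩ := hq
  rw [signlessLaplacian_eq] at hxq
  obtain ⟨u, hu⟩ := G.exists_mul_degree_le_of_mulVec_eq hdeg hx hxq
  have h₁ := G.sum_degree_neighborFinset_add_card_sub_one_le hdeg u
  have h₂ := G.sum_degree_neighborFinset_le u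
  have h₃ := G.degree_lt_card_verts u
  simp only [Fintype.card_fin, hedges] at h₁ h₂ h₃
  have h1n : 1 ≤ n := by omega
  have hdN : (G.degree u : ℝ) ≤ n - 1 := by
    rw [le_sub_iff_add_le]; exact_mod_cast h₃
  have hS₁ : ∑ v ∈ G.neighborFinset u, (G.degree v : ℝ) ≤ 2 * m - (n - 1) := by
    have := Nat.cast_le (α := ℝ).2 h₁
    push_cast [h1n] at this
    linarith
  have hS₂ : ∑ v ∈ G.neighborFinset u, (G.degree v : ℝ) ≤ G.degree u * (n - 1) := by
    have := Nat.cast_le (α := ℝ).2 h₂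
    push_cast [h1n] at this
    exact this
  have := le_two_mul_div_add_sub_one_of_mul_le (Nat.cast_pos.2 (hdeg u)) hdN hS₁ hS₂ hu
  linarith
end

section
/- Let G be a connected graph and q(G) the largest eigenvalue of its signless Laplacian. Then q(G) ≤ max over vertices v of (d_v + (1/d_v) · Σ_{w ∈ N(v)} d_w), where d_v denotes the degree of v and N(v) its neighborhood. -/
open Matrix SimpleGraph

noncomputable def deg {n : ℕ} (G : SimpleGraph (Fin n)) (v : Fin n) : ℕ :=
  letI := Classical.decRel G.Adj
  G.degree v

noncomputable def nbr {n : ℕ} (G : SimpleGraph (Fin n)) (v : Fin n) : Finset (Fin n) :=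
  letI := Classical.decRel G.Adj
  G.neighborFinset v

/-!
Let `Q x = q x` with `x ≠ 0` and `q > 0`, and put `y_v = x_v / d_v`. Since `q x_v = 0` at an
isolated vertex, `x = d y` everywhere (also where `d_v = 0` and `y_v = 0` by convention). At a vertex
`v` maximising `|y_v|` the `v`-th row of `Q x = q x` gives
`q d_v |y_v| ≤ d_v |x_v| + ∑_{w ∼ v} |x_w| ≤ d_v² |y_v| + ∑_{w ∼ v} d_w |y_v|`, and `d_v |y_v| > 0`.
-/

theorem signlessLaplacian_mulVec_apply {n : ℕ} (G : SimpleGraph (Fin n)) (x : Fin n → ℝ)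
    (v : Fin n) :
    (signlessLaplacian G *ᵥ x) v = (deg G v : ℝ) * x v + ∑ w ∈ nbr G v, x w := by
  simp only [signlessLaplacian, deg, nbr, add_mulVec, Pi.add_apply, mulVec_diagonal,
    adjMatrix_mulVec_apply]

section Eigenvector

variable {V : Type*} [Fintype V] (G : SimpleGraph V) [DecidableRel G.Adj] {x : V → ℝ} {q : ℝ}

theorem eq_degree_mul_div_of_eigen (hq : q ≠ 0)
    (heq : ∀ v, (G.degree v : ℝ) * x v + ∑ w ∈ G.neighborFinset v, x w = q * x v) (w : V) :
    x w = G.degree w * (x w / G.degree w) := by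
  by_cases hw : (G.degree w : ℝ) = 0
  · have hnbr : G.neighborFinset w = ∅ := by
      rw [← Finset.card_eq_zero, card_neighborFinset_eq_degree]
      exact_mod_cast hw
    have := heq w
    rw [hw, hnbr, Finset.sum_empty, zero_mul, add_zero, zero_eq_mul] at this
    rw [this.resolve_left hq, zero_div, mul_zero]
  · exact (mul_div_cancel₀ _ hw).symm

theorem exists_le_degree_add_avg_of_eigen (hx : x ≠ 0) (hq : 0 < q)
    (heq : ∀ v, (G.degree v : ℝ) * x v + ∑ w ∈ G.neighborFinset v, x w = q * x v) :
    ∃ v, q ≤ G.degree v + 1 / G.degree v * ∑ w ∈ G.neighborFinset v, (G.degree w : ℝ) := by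
  set d : V → ℝ := fun v => G.degree v
  set y : V → ℝ := fun v => x v / d v
  have hxy : ∀ w, x w = d w * y w := eq_degree_mul_div_of_eigen G hq.ne' heq
  obtain ⟨u, hu⟩ := Function.ne_iff.mp hx
  have : Nonempty V := ⟨u⟩
  obtain ⟨v, hv⟩ := Finite.exists_max fun w => |y w|
  have hyv : 0 < |y v| := by
    refine (abs_pos.mpr fun h => hu ?_).trans_le (hv u)
    rw [hxy u, h, mul_zero, Pi.zero_apply]
  have hdv : 0 < d v := by
    refine (Nat.cast_nonneg _).lt_of_ne' fun h => hyv.ne' ?_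
    simp only [y, d, h, div_zero, abs_zero]
  refine ⟨v, le_of_mul_le_mul_right ?_ (mul_pos hdv hyv)⟩
  calc q * (d v * |y v|) = |d v * x v + ∑ w ∈ G.neighborFinset v, x w| := by
        rw [heq, abs_mul, abs_of_pos hq, hxy, abs_mul, abs_of_pos hdv]
    _ ≤ d v * |x v| + ∑ w ∈ G.neighborFinset v, |x w| := by
        refine (abs_add_le _ _).trans (add_le_add ?_ (Finset.abs_sum_le_sum_abs _ _))
        rw [abs_mul, abs_of_pos hdv]
    _ ≤ d v * (d v * |y v|) + ∑ w ∈ G.neighborFinset v, d w * |y v| := by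
        rw [hxy v, abs_mul, abs_of_pos hdv]
        gcongr with w
        rw [hxy w, abs_mul, abs_of_nonneg (Nat.cast_nonneg _)]
        exact mul_le_mul_of_nonneg_left (hv w) (Nat.cast_nonneg _)
    _ = (d v + 1 / d v * ∑ w ∈ G.neighborFinset v, d w) * (d v * |y v|) := by
        rw [← Finset.sum_mul]
        field_simp

end Eigenvector

theorem stmt1_general {n : ℕ} (hn : 0 < n) (G : SimpleGraph (Fin n))
    (q : ℝ) (hq : IsMaxEigenvalue (signlessLaplacian G) q) :
    q ≤ Finset.univ.sup' (Finset.univ_nonempty_iff.mpr (Fin.pos_iff_nonempty.mp hn))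
      (fun v => (deg G v : ℝ) + (1 / (deg G v : ℝ)) * ∑ w ∈ nbr G v, (deg G w : ℝ)) := by
  let := Classical.decRel G.Adj
  obtain ⟨⟨x, hx, hxq⟩, -⟩ := hq
  rcases le_or_gt q 0 with hq0 | hq0
  · exact hq0.trans (Finset.le_sup'_of_le _ (Finset.mem_univ ⟨0, hn⟩) (by positivity))
  · have heq : ∀ v, (G.degree v : ℝ) * x v + ∑ w ∈ G.neighborFinset v, x w = q * x v :=
      fun v => by simpa [hxq, deg, nbr] using (signlessLaplacian_mulVec_apply G x v).symm
    obtain ⟨v, hv⟩ := exists_le_degree_add_avg_of_eigen G hx hq0 heq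
    exact Finset.le_sup'_of_le _ (Finset.mem_univ v) hv

theorem stmt1 {n : ℕ} (hn : 0 < n) (G : SimpleGraph (Fin n)) (hconn : G.Connected)
    (q : ℝ) (hq : IsMaxEigenvalue (signlessLaplacian G) q) :
    q ≤ Finset.univ.sup' (Finset.univ_nonempty_iff.mpr (Fin.pos_iff_nonempty.mp hn))
      (fun v => (deg G v : ℝ) + (1 / (deg G v : ℝ)) * ∑ w ∈ nbr G v, (deg G w : ℝ)) :=
  stmt1_general hn G q hq
end

section
/- Let G be a connected graph, 0 ≤ α < 1, and x the Perron vector of A_α(G) = αD(G) + (1-α)A(G). If u and v are distinct vertices with N(u)\{v} ⊋ N(v)\{u}, then x_u > x_v. -/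
open Matrix SimpleGraph

noncomputable def Aalpha {n : ℕ} (G : SimpleGraph (Fin n)) (α : ℝ) :
    Matrix (Fin n) (Fin n) ℝ :=
  letI := Classical.decRel G.Adj
  α • Matrix.diagonal (fun v => (G.degree v : ℝ)) + (1 - α) • G.adjMatrix ℝ

theorem stmt6 {n : ℕ} (G : SimpleGraph (Fin n)) (hconn : G.Connected)
    (α : ℝ) (hα0 : 0 ≤ α) (hα1 : α < 1)
    (ρ : ℝ) (x : Fin n → ℝ) (hx : ∀ v, 0 < x v)
    (hev : (Aalpha G α).mulVec x = ρ • x)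
    (hmax : IsMaxEigenvalue (Aalpha G α) ρ)
    (u v : Fin n) (huv : u ≠ v)
    (hsub : G.neighborSet v \ {u} ⊂ G.neighborSet u \ {v}) :
    x v < x u := by
  letI : DecidableRel G.Adj := Classical.decRel G.Adj
  have key : ∀ w, ρ * x w = α * (G.degree w) * x w
      + (1-α) * ∑ z ∈ G.neighborFinset w, x z := by
    intro w
    have h := congrFun hev w
    simp only [Aalpha, Matrix.add_mulVec, Matrix.smul_mulVec,
      Matrix.mulVec_diagonal, Pi.add_apply, Pi.smul_apply, smul_eq_mul,
      SimpleGraph.adjMatrix_mulVec_apply] at h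
    linarith [h]
  set T : Finset (Fin n) := (G.neighborFinset u).erase v with hT
  set S : Finset (Fin n) := (G.neighborFinset v).erase u with hS
  have hST : S ⊂ T := by
    rw [← Finset.coe_ssubset, hS, hT, Finset.coe_erase, Finset.coe_erase,
      neighborFinset_def, neighborFinset_def, Set.coe_toFinset, Set.coe_toFinset]
    exact hsub
  set ε : ℝ := if G.Adj u v then 1 else 0 with hε
  have hε0 : 0 ≤ ε := by rw [hε]; split <;> norm_num
  have hnotmem : ¬ G.Adj u v → u ∉ G.neighborFinset v := by
    intro h hm
    exact h ((mem_neighborFinset _ _ _).1 hm).symm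
  have hdu : (G.degree u : ℝ) = T.card + ε := by
    rw [hε]
    by_cases h : G.Adj u v
    · have hv : v ∈ G.neighborFinset u := by simpa using h
      have h1 : 1 ≤ (G.neighborFinset u).card := Finset.card_pos.2 ⟨v, hv⟩
      rw [if_pos h, hT, Finset.card_erase_of_mem hv, ← G.card_neighborFinset_eq_degree,
        Nat.cast_sub h1]
      push_cast; ring
    · rw [if_neg h, hT, Finset.erase_eq_of_notMem (by simpa using h),
        ← G.card_neighborFinset_eq_degree]
      push_cast; ring
  have hdv : (G.degree v : ℝ) = S.card + ε := by
    rw [hε]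
    by_cases h : G.Adj u v
    · have hu' : u ∈ G.neighborFinset v := by simpa using h.symm
      have h1 : 1 ≤ (G.neighborFinset v).card := Finset.card_pos.2 ⟨u, hu'⟩
      rw [if_pos h, hS, Finset.card_erase_of_mem hu', ← G.card_neighborFinset_eq_degree,
        Nat.cast_sub h1]
      push_cast; ring
    · rw [if_neg h, hS, Finset.erase_eq_of_notMem (hnotmem h),
        ← G.card_neighborFinset_eq_degree]
      push_cast; ring
  have hsumu : ∑ z ∈ G.neighborFinset u, x z = (∑ z ∈ T, x z) + ε * x v := by
    rw [hε]
    by_cases h : G.Adj u v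
    · have hv : v ∈ G.neighborFinset u := by simpa using h
      rw [if_pos h, hT, one_mul, Finset.sum_erase_add _ _ hv]
    · rw [if_neg h, hT, Finset.erase_eq_of_notMem (by simpa using h)]; ring
  have hsumv : ∑ z ∈ G.neighborFinset v, x z = (∑ z ∈ S, x z) + ε * x u := by
    rw [hε]
    by_cases h : G.Adj u v
    · have hu' : u ∈ G.neighborFinset v := by simpa using h.symm
      rw [if_pos h, hS, one_mul, Finset.sum_erase_add _ _ hu']
    · rw [if_neg h, hS, Finset.erase_eq_of_notMem (hnotmem h)]; ring
  have hTsum : ∑ z ∈ T, x z = (∑ z ∈ T \ S, x z) + ∑ z ∈ S, x z :=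
    (Finset.sum_sdiff hST.subset).symm
  obtain ⟨z, hzT, hzS⟩ := Finset.exists_of_ssubset hST
  have hBpos : 0 < ∑ z ∈ T \ S, x z :=
    Finset.sum_pos (fun i _ => hx i) ⟨z, Finset.mem_sdiff.2 ⟨hzT, hzS⟩⟩
  have hApos : 0 ≤ ∑ z ∈ S, x z := Finset.sum_nonneg fun i _ => (hx i).le
  have hcard : (S.card : ℝ) + 1 ≤ T.card := by
    exact_mod_cast Finset.card_lt_card hST
  -- ρ > α * degree u
  have hρ : α * ((T.card : ℝ) + ε) < ρ := by
    have hk := key u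
    rw [hdu, hsumu, hTsum] at hk
    have hNu : 0 < (∑ z ∈ T \ S, x z) + (∑ z ∈ S, x z) + ε * x v := by
      nlinarith [mul_nonneg hε0 (hx v).le]
    by_contra hcc
    push_neg at hcc
    have := mul_le_mul_of_nonneg_right hcc (hx u).le
    nlinarith [mul_pos (sub_pos.2 hα1) hNu]
  have equ := key u
  have eqv := key v
  rw [hdu, hsumu, hTsum] at equ
  rw [hdv, hsumv] at eqv
  by_contra hcon
  push_neg at hcon
  have hD : 0 ≤ x v - x u := sub_nonneg.2 hcon
  have h1 : (0:ℝ) ≤ (T.card : ℝ) - S.card - 1 := by linarith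
  nlinarith [mul_nonneg (sub_pos.2 hρ).le hD,
    mul_nonneg (mul_nonneg (sub_pos.2 hα1).le hε0) hD,
    mul_nonneg (mul_nonneg hα0 h1) (hx v).le,
    mul_pos (sub_pos.2 hα1) hBpos,
    mul_nonneg hα0 (hx v).le]
end

section
/- Every threshold graph is determined up to isomorphism by its degree sequence: if G and H are threshold graphs with the same degree sequence (as multisets), then G and H are isomorphic. -/
open SimpleGraph

/-- The graph `2K₂` on four vertices: two disjoint edges. -/
def twoK2 : SimpleGraph (Fin 4) :=
  SimpleGraph.fromRel (fun a b => (a = 0 ∧ b = 1) ∨ (a = 2 ∧ b = 3))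

/-- A graph is a threshold graph if it has no induced subgraph isomorphic to
`2K₂`, `C₄` or `P₄`.  (Graph embeddings are induced-subgraph embeddings.) -/
def IsThreshold {V : Type} (G : SimpleGraph V) : Prop :=
  IsEmpty (twoK2 ↪g G) ∧ IsEmpty (SimpleGraph.cycleGraph 4 ↪g G) ∧
    IsEmpty (SimpleGraph.pathGraph 4 ↪g G)

/- ### Auxiliary lemmas -/

def embOfFour {V : Type} {K : SimpleGraph (Fin 4)} {G : SimpleGraph V} (f : Fin 4 → V)
    (hinj : Function.Injective f) (h : ∀ i j, G.Adj (f i) (f j) ↔ K.Adj i j) : K ↪g G :=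
  ⟨⟨f, hinj⟩, fun {i j} => h i j⟩

lemma threshold_comap {V W : Type} {G : SimpleGraph W} (f : V ↪ W) (h : IsThreshold G) :
    IsThreshold (G.comap f) := by
  obtain ⟨h1, h2, h3⟩ := h
  exact ⟨⟨fun e => h1.false ((Embedding.comap f G).comp e)⟩,
    ⟨fun e => h2.false ((Embedding.comap f G).comp e)⟩,
    ⟨fun e => h3.false ((Embedding.comap f G).comp e)⟩⟩

lemma nested {V : Type} {G : SimpleGraph V} (hG : IsThreshold G) (u v : V) (huv : u ≠ v) :
    (∀ a, a ≠ v → G.Adj u a → G.Adj v a) ∨ (∀ a, a ≠ u → G.Adj v a → G.Adj u a) := by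
  by_contra hc
  push_neg at hc
  obtain ⟨⟨a, hav, hua, hva⟩, ⟨b, hbu, hvb, hub⟩⟩ := hc
  have hau : a ≠ u := fun h => G.irrefl (h ▸ hua)
  have hbv : b ≠ v := fun h => G.irrefl (h ▸ hvb)
  have hab : a ≠ b := fun h => hva (by rw [h]; exact hvb)
  have hau' : G.Adj a u := hua.symm
  have hbv' : G.Adj b v := hvb.symm
  have hav' : ¬ G.Adj a v := fun h => hva h.symm
  have hbu' : ¬ G.Adj b u := fun h => hub h.symm
  have hvu : v ≠ u := fun h => huv h.symm
  have hba : b ≠ a := fun h => hab h.symm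
  obtain ⟨h2, hC, hP⟩ := hG
  by_cases huv' : G.Adj u v <;> by_cases hab' : G.Adj a b
  · have hvu' : G.Adj v u := huv'.symm
    have hba' : G.Adj b a := hab'.symm
    exact hC.elim (embOfFour ![u, a, b, v]
      (by intro i j hij; fin_cases i <;> fin_cases j <;> simp_all)
      (by intro i j; fin_cases i <;> fin_cases j <;>
        simp_all [cycleGraph, circulantGraph, SimpleGraph.fromRel_adj] <;> decide))
  · have hvu' : G.Adj v u := huv'.symm
    have hab'' : ¬ G.Adj b a := fun h => hab' h.symm
    exact hP.elim (embOfFour ![a, u, v, b]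
      (by intro i j hij; fin_cases i <;> fin_cases j <;> simp_all)
      (by intro i j; fin_cases i <;> fin_cases j <;>
        simp_all [pathGraph_adj] <;> decide))
  · have hba' : G.Adj b a := hab'.symm
    have huv'' : ¬ G.Adj v u := fun h => huv' h.symm
    exact hP.elim (embOfFour ![u, a, b, v]
      (by intro i j hij; fin_cases i <;> fin_cases j <;> simp_all)
      (by intro i j; fin_cases i <;> fin_cases j <;>
        simp_all [pathGraph_adj] <;> decide))
  · have huv'' : ¬ G.Adj v u := fun h => huv' h.symm
    have hab'' : ¬ G.Adj b a := fun h => hab' h.symm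
    exact h2.elim (embOfFour ![u, a, v, b]
      (by intro i j hij; fin_cases i <;> fin_cases j <;> simp_all)
      (by intro i j; fin_cases i <;> fin_cases j <;>
        simp_all [twoK2, SimpleGraph.fromRel_adj] <;> decide))

lemma iso_or_dom {n : ℕ} (G : SimpleGraph (Fin (n+1))) (hG : IsThreshold G) :
    (∃ v, ∀ w, ¬ G.Adj v w) ∨ (∃ v, ∀ w, w ≠ v → G.Adj v w) := by
  classical
  by_contra hc
  push_neg at hc
  obtain ⟨hiso, hdom⟩ := hc
  obtain ⟨u, -, hu⟩ := Finset.exists_max_image (Finset.univ : Finset (Fin (n+1)))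
    (fun v => G.degree v) ⟨0, Finset.mem_univ 0⟩
  obtain ⟨w, hwu, huw⟩ := hdom u
  obtain ⟨x, hwx⟩ := hiso w
  have hxu : x ≠ u := fun h => huw (h ▸ hwx).symm
  have hxw : x ≠ w := fun h => G.irrefl (h ▸ hwx)
  have hnb : ∀ c, c ≠ x → G.Adj u c → G.Adj x c := by
    rcases nested hG u x hxu.symm with h | h
    · exact h
    · exact absurd (h w hwu hwx.symm) huw
  have hsub : insert w ((G.neighborFinset u).erase x) ⊆ G.neighborFinset x := by
    intro c hc
    rw [Finset.mem_insert] at hc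
    rcases hc with rfl | hc
    · exact (G.mem_neighborFinset _ _).2 hwx.symm
    · rw [Finset.mem_erase, G.mem_neighborFinset] at hc
      exact (G.mem_neighborFinset _ _).2 (hnb c hc.1 hc.2)
  have hwn : w ∉ (G.neighborFinset u).erase x := by
    rw [Finset.mem_erase, G.mem_neighborFinset]
    rintro ⟨-, h⟩; exact huw h
  have hdx : G.degree u < G.degree x := by
    by_cases hxNu : x ∈ G.neighborFinset u
    · have hun : u ∈ G.neighborFinset x := by
        rw [G.mem_neighborFinset] at hxNu ⊢; exact hxNu.symm
      have hun' : u ∉ insert w ((G.neighborFinset u).erase x) := by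
        simp only [Finset.mem_insert, Finset.mem_erase, G.mem_neighborFinset]
        rintro (rfl | ⟨-, h⟩)
        · exact hwu rfl
        · exact G.irrefl h
      have h1 : insert u (insert w ((G.neighborFinset u).erase x)) ⊆ G.neighborFinset x :=
        Finset.insert_subset hun hsub
      calc G.degree u = (G.neighborFinset u).card := rfl
        _ < (insert u (insert w ((G.neighborFinset u).erase x))).card := by
            rw [Finset.card_insert_of_notMem hun', Finset.card_insert_of_notMem hwn,
              Finset.card_erase_of_mem hxNu]
            have : 1 ≤ (G.neighborFinset u).card := Finset.card_pos.2 ⟨x, hxNu⟩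
            omega
        _ ≤ (G.neighborFinset x).card := Finset.card_le_card h1
        _ = G.degree x := rfl
    · calc G.degree u = (G.neighborFinset u).card := rfl
        _ < (insert w ((G.neighborFinset u).erase x)).card := by
            rw [Finset.card_insert_of_notMem hwn, Finset.erase_eq_of_notMem hxNu]
            omega
        _ ≤ (G.neighborFinset x).card := Finset.card_le_card hsub
        _ = G.degree x := rfl
  exact absurd (hu x (Finset.mem_univ x)) (not_le.2 hdx)

lemma deg_eq {n : ℕ} (G : SimpleGraph (Fin n)) (v : Fin n) [inst : DecidableRel G.Adj] :
    deg G v = G.degree v := by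
  unfold deg; congr!

lemma univ_val_eq {n : ℕ} (v : Fin (n + 1)) :
    (Finset.univ : Finset (Fin (n+1))).val
      = v ::ₘ Multiset.map v.succAbove (Finset.univ : Finset (Fin n)).val := by
  have h1 : (insert v (Finset.univ.map (Fin.succAboveEmb v)) : Finset (Fin (n+1)))
      = Finset.univ := by
    ext x
    simp only [Finset.mem_insert, Finset.mem_map, Finset.mem_univ, iff_true]
    by_cases hx : x = v
    · exact Or.inl hx
    · obtain ⟨i, hi⟩ := Fin.exists_succAbove_eq hx
      exact Or.inr ⟨i, trivial, hi⟩
  have h2 : v ∉ Finset.univ.map (Fin.succAboveEmb v) := by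
    simp only [Finset.mem_map]
    rintro ⟨i, -, hi⟩
    exact Fin.succAbove_ne v i hi
  rw [← h1, Finset.insert_val, Multiset.ndinsert_of_notMem h2]
  rfl

lemma map_univ_succAbove {n : ℕ} (f : Fin (n+1) → ℕ) (v : Fin (n+1)) :
    Multiset.map f (Finset.univ : Finset (Fin (n+1))).val
      = f v ::ₘ Multiset.map (fun i => f (v.succAbove i)) (Finset.univ : Finset (Fin n)).val := by
  rw [univ_val_eq v, Multiset.map_cons, Multiset.map_map]
  rfl

section DegLemmas
variable {n : ℕ} (G : SimpleGraph (Fin (n+1))) (v : Fin (n+1))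
  [DecidableRel G.Adj] [DecidableRel (G.comap v.succAbove).Adj]

lemma nbr_comap (a : Fin n) (hv : ¬ G.Adj v (v.succAbove a)) :
    G.neighborFinset (v.succAbove a)
      = ((G.comap v.succAbove).neighborFinset a).map (Fin.succAboveEmb v) := by
  ext x
  simp only [mem_neighborFinset, Finset.mem_map, comap_adj, Fin.succAboveEmb,
    Function.Embedding.coeFn_mk]
  constructor
  · intro hx
    have hxv : x ≠ v := by rintro rfl; exact hv hx.symm
    obtain ⟨j, rfl⟩ := Fin.exists_succAbove_eq hxv
    exact ⟨j, hx, rfl⟩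
  · rintro ⟨j, hj, rfl⟩
    exact hj

lemma nbr_comap_dom (a : Fin n) (hv : G.Adj v (v.succAbove a)) :
    G.neighborFinset (v.succAbove a)
      = insert v (((G.comap v.succAbove).neighborFinset a).map (Fin.succAboveEmb v)) := by
  ext x
  simp only [mem_neighborFinset, Finset.mem_map, comap_adj, Fin.succAboveEmb,
    Function.Embedding.coeFn_mk, Finset.mem_insert]
  constructor
  · intro hx
    by_cases hxv : x = v
    · exact Or.inl hxv
    · obtain ⟨j, rfl⟩ := Fin.exists_succAbove_eq hxv
      exact Or.inr ⟨j, hx, rfl⟩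
  · rintro (rfl | ⟨j, hj, rfl⟩)
    · exact hv.symm
    · exact hj

lemma deg_comap_of_isolated (hv : ∀ w, ¬ G.Adj v w) (a : Fin n) :
    deg (G.comap v.succAbove) a = deg G (v.succAbove a) := by
  rw [deg_eq, deg_eq, degree, degree, nbr_comap G v a (hv _), Finset.card_map]

lemma deg_comap_of_dom (hv : ∀ w, w ≠ v → G.Adj v w) (a : Fin n) :
    deg G (v.succAbove a) = deg (G.comap v.succAbove) a + 1 := by
  rw [deg_eq, deg_eq, degree, degree,
    nbr_comap_dom G v a (hv _ (Fin.succAbove_ne v a)),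
    Finset.card_insert_of_notMem, Finset.card_map]
  simp only [Finset.mem_map, Fin.succAboveEmb, Function.Embedding.coeFn_mk]
  rintro ⟨j, -, hj⟩
  exact Fin.succAbove_ne v j hj

omit [DecidableRel (SimpleGraph.comap v.succAbove G).Adj] in
lemma deg_isolated (hv : ∀ w, ¬ G.Adj v w) : deg G v = 0 := by
  rw [deg_eq, degree, Finset.card_eq_zero, Finset.eq_empty_iff_forall_notMem]
  intro x hx
  exact hv x ((mem_neighborFinset _ _ _).1 hx)

omit [DecidableRel (SimpleGraph.comap v.succAbove G).Adj] in
lemma deg_dom (hv : ∀ w, w ≠ v → G.Adj v w) : deg G v = n := by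
  rw [deg_eq, degree]
  have : G.neighborFinset v = Finset.univ.erase v := by
    ext x
    simp only [mem_neighborFinset, Finset.mem_erase, Finset.mem_univ, and_true]
    exact ⟨fun h => (G.ne_of_adj h).symm, fun h => hv x h⟩
  rw [this, Finset.card_erase_of_mem (Finset.mem_univ v)]
  simp

omit [DecidableRel (SimpleGraph.comap v.succAbove G).Adj] in
lemma isolated_of_deg_zero (w : Fin (n+1)) (hw : deg G w = 0) : ∀ z, ¬ G.Adj w z := by
  rw [deg_eq, degree, Finset.card_eq_zero] at hw
  intro z hz
  exact absurd ((mem_neighborFinset _ _ _).2 hz) (by simp [hw])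

omit [DecidableRel (SimpleGraph.comap v.succAbove G).Adj] in
lemma dom_of_deg_n (w : Fin (n+1)) (hw : deg G w = n) : ∀ z, z ≠ w → G.Adj w z := by
  rw [deg_eq, degree] at hw
  have hsub : G.neighborFinset w ⊆ Finset.univ.erase w := by
    intro x hx
    simp only [Finset.mem_erase, Finset.mem_univ, and_true]
    exact (G.ne_of_adj ((mem_neighborFinset _ _ _).1 hx)).symm
  have hcard : (Finset.univ.erase w).card = n := by
    rw [Finset.card_erase_of_mem (Finset.mem_univ w)]; simp
  have heq := Finset.eq_of_subset_of_card_le hsub (by omega)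
  intro z hz
  have : z ∈ G.neighborFinset w := by
    rw [heq]; simp [hz]
  exact (mem_neighborFinset _ _ _).1 this

end DegLemmas

section Ext
variable {n : ℕ} {G H : SimpleGraph (Fin (n+1))} {v w : Fin (n+1)}

noncomputable def extEquiv (ι : (G.comap v.succAbove) ≃g (H.comap w.succAbove)) :
    Fin (n+1) ≃ Fin (n+1) :=
  (finSuccEquiv' v).trans ((Equiv.optionCongr ι.toEquiv).trans (finSuccEquiv' w).symm)

lemma extEquiv_at (ι : (G.comap v.succAbove) ≃g (H.comap w.succAbove)) :
    extEquiv ι v = w := by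
  simp [extEquiv, finSuccEquiv'_at, finSuccEquiv'_symm_none]

lemma extEquiv_succAbove (ι : (G.comap v.succAbove) ≃g (H.comap w.succAbove)) (i : Fin n) :
    extEquiv ι (v.succAbove i) = w.succAbove (ι i) := by
  simp [extEquiv, finSuccEquiv'_succAbove, finSuccEquiv'_symm_some]

lemma adj_iff_cases (ι : (G.comap v.succAbove) ≃g (H.comap w.succAbove))
    (hvw : ∀ y, G.Adj v y ↔ H.Adj w (extEquiv ι y)) :
    ∀ x y, H.Adj (extEquiv ι x) (extEquiv ι y) ↔ G.Adj x y := by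
  intro x y
  by_cases hx : x = v
  · subst hx; rw [extEquiv_at]
    exact (hvw y).symm
  · by_cases hy : y = v
    · subst hy; rw [extEquiv_at, H.adj_comm, G.adj_comm]
      exact (hvw x).symm
    · obtain ⟨i, rfl⟩ := Fin.exists_succAbove_eq hx
      obtain ⟨j, rfl⟩ := Fin.exists_succAbove_eq hy
      rw [extEquiv_succAbove, extEquiv_succAbove]
      exact ι.map_adj_iff
end Ext

lemma key : ∀ (n : ℕ) (G H : SimpleGraph (Fin n)), IsThreshold G → IsThreshold H →
    Multiset.map (fun v => deg G v) Finset.univ.val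
      = Multiset.map (fun v => deg H v) Finset.univ.val → Nonempty (G ≃g H) := by
  intro n
  induction n with
  | zero =>
    intro G H _ _ _
    exact ⟨⟨Equiv.refl _, fun {a b} => a.elim0⟩⟩
  | succ n ih =>
    intro G H hG hH hdeg
    classical
    rcases iso_or_dom G hG with ⟨v, hv⟩ | ⟨v, hv⟩
    · -- v isolated in G
      have h0 : (0:ℕ) ∈ Multiset.map (fun v => deg H v) Finset.univ.val := by
        rw [← hdeg]
        exact Multiset.mem_map.2 ⟨v, by simp, deg_isolated G v hv⟩
      obtain ⟨w, -, hw0⟩ := Multiset.mem_map.1 h0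
      have hw : ∀ z, ¬ H.Adj w z := isolated_of_deg_zero H w hw0
      have hdeg' : Multiset.map (fun a => deg (G.comap v.succAbove) a) Finset.univ.val
          = Multiset.map (fun a => deg (H.comap w.succAbove) a) Finset.univ.val := by
        rw [map_univ_succAbove (fun x => deg G x) v, map_univ_succAbove (fun x => deg H x) w,
          deg_isolated G v hv, deg_isolated H w hw] at hdeg
        have h2 := (Multiset.cons_inj_right 0).1 hdeg
        rw [Multiset.map_congr rfl (fun a _ => deg_comap_of_isolated G v hv a),
          Multiset.map_congr rfl (fun a _ => deg_comap_of_isolated H w hw a)]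
        exact h2
      obtain ⟨ι⟩ := ih (G.comap v.succAbove) (H.comap w.succAbove)
        (threshold_comap (Fin.succAboveEmb v) hG) (threshold_comap (Fin.succAboveEmb w) hH) hdeg'
      refine ⟨⟨extEquiv ι, fun {x y} => adj_iff_cases ι ?_ x y⟩⟩
      intro y
      simp only [hv y, false_iff]
      exact hw _
    · -- v dominating in G
      have hn : (n:ℕ) ∈ Multiset.map (fun v => deg H v) Finset.univ.val := by
        rw [← hdeg]
        exact Multiset.mem_map.2 ⟨v, by simp, deg_dom G v hv⟩
      obtain ⟨w, -, hwn⟩ := Multiset.mem_map.1 hn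
      have hw : ∀ z, z ≠ w → H.Adj w z := dom_of_deg_n H w hwn
      have hdeg' : Multiset.map (fun a => deg (G.comap v.succAbove) a) Finset.univ.val
          = Multiset.map (fun a => deg (H.comap w.succAbove) a) Finset.univ.val := by
        rw [map_univ_succAbove (fun x => deg G x) v, map_univ_succAbove (fun x => deg H x) w,
          deg_dom G v hv, deg_dom H w hw] at hdeg
        have h2 := (Multiset.cons_inj_right (n:ℕ)).1 hdeg
        have h3 : Multiset.map (fun a => deg (G.comap v.succAbove) a + 1) Finset.univ.val
            = Multiset.map (fun a => deg (H.comap w.succAbove) a + 1) Finset.univ.val :=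
          (Multiset.map_congr rfl (fun a _ => deg_comap_of_dom G v hv a)).symm.trans
            (h2.trans (Multiset.map_congr rfl (fun a _ => deg_comap_of_dom H w hw a)))
        have h4 : Multiset.map (fun m : ℕ => m + 1)
              (Multiset.map (fun a => deg (G.comap v.succAbove) a) Finset.univ.val)
            = Multiset.map (fun m : ℕ => m + 1)
              (Multiset.map (fun a => deg (H.comap w.succAbove) a) Finset.univ.val) := by
          rw [Multiset.map_map, Multiset.map_map]
          exact h3
        exact Multiset.map_injective (add_left_injective 1) h4
      obtain ⟨ι⟩ := ih (G.comap v.succAbove) (H.comap w.succAbove)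
        (threshold_comap (Fin.succAboveEmb v) hG) (threshold_comap (Fin.succAboveEmb w) hH) hdeg'
      refine ⟨⟨extEquiv ι, fun {x y} => adj_iff_cases ι ?_ x y⟩⟩
      intro y
      by_cases hy : y = v
      · subst hy
        rw [extEquiv_at]
        simp [G.irrefl, H.irrefl]
      · obtain ⟨j, rfl⟩ := Fin.exists_succAbove_eq hy
        rw [extEquiv_succAbove]
        simp only [hv _ (Fin.succAbove_ne v j), true_iff]
        exact hw _ (Fin.succAbove_ne w (ι j))

theorem stmt8 {n : ℕ} (G H : SimpleGraph (Fin n))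
    (hG : IsThreshold G) (hH : IsThreshold H)
    (hdeg : Multiset.map (fun v => deg G v) Finset.univ.val
          = Multiset.map (fun v => deg H v) Finset.univ.val) :
    Nonempty (G ≃g H) := by
  exact key n G H hG hH hdeg
end

section
/- A finite simple graph G is a threshold graph if and only if G can be constructed from the one-vertex graph by repeatedly adding either an isolated vertex or a universal vertex (a vertex adjacent to all existing vertices). -/
open SimpleGraph

/-! Call `u ≼ v` when `N(u) ⊆ N[v]` (the vicinal preorder). It is transitive in every graph, and
in a threshold graph it is total: edges `ua`, `vb` with `a ∉ N[v]` and `b ∉ N[u]` span an induced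
`2K₂`, `P₄` or `C₄`, according to which of `uv`, `ab` are edges. If a `≼`-greatest vertex `v` is
not universal, any non-neighbour `x` of `v` is isolated: a neighbour `y` of `x` would lie in
`N(v)`, and then `x ∈ N(y) ⊆ N[v]`. Deleting a universal or isolated vertex and inducting yields
the construction order. Conversely, the latest of four vertices in such an order is adjacent to
all or none of the other three, which none of `2K₂`, `P₄`, `C₄` allows. -/

instance : DecidableRel twoK2.Adj := fun a b =>
  decidable_of_iff _ (SimpleGraph.fromRel_adj _ a b).symm

instance : DecidableRel (pathGraph 4).Adj := fun _ _ =>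
  decidable_of_iff _ pathGraph_adj.symm

namespace SimpleGraph

variable {V : Type} (G : SimpleGraph V)

def VicinalLE (u v : V) : Prop := G.neighborSet u ⊆ insert v (G.neighborSet v)

/-- `e i` is the vertex added at step `i`, universal or isolated among `e 0, …, e (i - 1)`. -/
def IsCreationSequence {n : ℕ} (e : Fin n ≃ V) : Prop :=
  ∀ i, (∀ j < i, G.Adj (e i) (e j)) ∨ ∀ j < i, ¬ G.Adj (e i) (e j)

variable {G}

theorem vicinalLE_refl (v : V) : G.VicinalLE v v := Set.subset_insert _ _

theorem VicinalLE.trans {u v w : V} (huv : G.VicinalLE u v) (hvw : G.VicinalLE v w) :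
    G.VicinalLE u w := by
  intro a (hua : G.Adj u a)
  rcases huv hua with rfl | hva
  · rcases hvw hua.symm with rfl | (hwu : G.Adj w u)
    · exact Or.inr hua
    · rcases huv hwu.symm with rfl | (hvw' : G.Adj a w)
      · exact Or.inl rfl
      · exact Or.inr hvw'.symm
  · exact hvw hva

instance : IsTrans V G.VicinalLE := ⟨fun _ _ _ => VicinalLE.trans⟩

theorem exists_forall_vicinalLE [Finite V] [Nonempty V]
    (htotal : ∀ u v, G.VicinalLE u v ∨ G.VicinalLE v u) : ∃ v, ∀ u, G.VicinalLE u v := by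
  have hdir : Directed G.VicinalLE id := fun u v =>
    (htotal u v).elim (fun h => ⟨v, h, vicinalLE_refl v⟩) (fun h => ⟨u, vicinalLE_refl u, h⟩)
  exact hdir.finite_le id

theorem not_isEmpty_embedding_of_adj_iff {W : Type} {H : SimpleGraph W} (f : W → V)
    (hf : f.Injective) (hadj : ∀ i j, G.Adj (f i) (f j) ↔ H.Adj i j) : ¬ IsEmpty (H ↪g G) :=
  fun h => h.false ⟨⟨f, hf⟩, hadj _ _⟩

theorem IsCreationSequence.snoc [DecidableEq V] {n : ℕ} {v : V} {e : Fin n ≃ {u // u ≠ v}}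
    (he : (G.comap (Function.Embedding.subtype _)).IsCreationSequence e)
    (hv : (∀ u ≠ v, G.Adj v u) ∨ ∀ u, ¬ G.Adj v u) :
    G.IsCreationSequence
      (finSuccEquivLast.trans (e.optionCongr.trans (Equiv.optionSubtypeNe v))) := by
  set e' := finSuccEquivLast.trans (e.optionCongr.trans (Equiv.optionSubtypeNe v))
  have he'_castSucc (k : Fin n) : e' k.castSucc = e k := by simp [e']
  have he'_last : e' (Fin.last n) = v := by simp [e']
  intro i
  induction i using Fin.lastCases with
  | last =>
    rw [he'_last]
    refine hv.imp (fun huniv j hj => ?_) (fun hiso j _ => hiso _)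
    induction j using Fin.lastCases with
    | last => exact absurd hj (lt_irrefl _)
    | cast j => exact he'_castSucc j ▸ huniv _ (e j).2
  | cast i =>
    have hlift (P : V → Prop) (hP : ∀ j < i, P (e j)) : ∀ j < i.castSucc, P (e' j) := by
      intro j hj
      induction j using Fin.lastCases with
      | last => exact absurd hj (Fin.castSucc_lt_last i).not_gt
      | cast j => exact he'_castSucc j ▸ hP j (Fin.castSucc_lt_castSucc_iff.mp hj)
    rw [he'_castSucc]
    exact (he i).imp (hlift (G.Adj (e i))) (hlift fun x => ¬ G.Adj (e i) x)

theorem IsCreationSequence.isEmpty_embedding {n : ℕ} {e : Fin n ≃ V}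
    (he : G.IsCreationSequence e) {W : Type} [Finite W] [Nonempty W] {H : SimpleGraph W}
    (hH : ∀ w, (∃ x, H.Adj w x) ∧ ∃ x ≠ w, ¬ H.Adj w x) : IsEmpty (H ↪g G) := by
  refine ⟨fun f => ?_⟩
  obtain ⟨w, hw⟩ := Finite.exists_max fun x => e.symm (f x)
  have hlt {x : W} (hxw : x ≠ w) : e.symm (f x) < e.symm (f w) :=
    (hw x).lt_of_ne fun h => hxw (f.injective (e.symm.injective h))
  obtain ⟨⟨x, hwx⟩, ⟨y, hyw, hwy⟩⟩ := hH w
  rcases he (e.symm (f w)) with hall | hnone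
  · simpa [hwy] using hall _ (hlt hyw)
  · simpa [hwx] using hnone _ (hlt hwx.ne')

theorem IsCreationSequence.isThreshold {n : ℕ} {e : Fin n ≃ V} (he : G.IsCreationSequence e) :
    IsThreshold G :=
  ⟨he.isEmpty_embedding (by decide), he.isEmpty_embedding (by decide),
    he.isEmpty_embedding (by decide)⟩

end SimpleGraph

namespace IsThreshold

variable {V : Type} {G : SimpleGraph V}

theorem of_embedding {W : Type} {H : SimpleGraph W} (f : H ↪g G) (hG : IsThreshold G) :
    IsThreshold H :=
  ⟨⟨fun g => hG.1.false (f.comp g)⟩, ⟨fun g => hG.2.1.false (f.comp g)⟩,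
    ⟨fun g => hG.2.2.false (f.comp g)⟩⟩

theorem adj_or_adj {u v a b : V} (hG : IsThreshold G) (hua : G.Adj u a) (hvb : G.Adj v b)
    (hav : a ≠ v) (hbu : b ≠ u) : G.Adj v a ∨ G.Adj u b := by
  obtain ⟨h2K2, hC4, hP4⟩ := hG
  by_contra! ⟨hva, hub⟩
  by_cases huv : G.Adj u v <;> by_cases hab : G.Adj a b
  · refine not_isEmpty_embedding_of_adj_iff ![u, a, b, v] ?_ ?_ hC4
    · intro i j hij
      fin_cases i <;> fin_cases j <;> simp_all [G.ne_of_adj, G.adj_comm]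
    · intro i j
      fin_cases i <;> fin_cases j <;> simp_all [cycleGraph_adj, G.adj_comm] <;> decide
  · refine not_isEmpty_embedding_of_adj_iff ![a, u, v, b] ?_ ?_ hP4
    · intro i j hij
      fin_cases i <;> fin_cases j <;> simp_all [G.ne_of_adj, G.adj_comm]
    · intro i j
      fin_cases i <;> fin_cases j <;> simp_all [pathGraph_adj, G.adj_comm]
  · refine not_isEmpty_embedding_of_adj_iff ![u, a, b, v] ?_ ?_ hP4
    · intro i j hij
      fin_cases i <;> fin_cases j <;> simp_all [G.ne_of_adj, G.adj_comm]
    · intro i j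
      fin_cases i <;> fin_cases j <;> simp_all [pathGraph_adj, G.adj_comm]
  · refine not_isEmpty_embedding_of_adj_iff ![u, a, v, b] ?_ ?_ h2K2
    · intro i j hij
      fin_cases i <;> fin_cases j <;> simp_all [G.ne_of_adj, G.adj_comm]
    · intro i j
      fin_cases i <;> fin_cases j <;> simp_all [twoK2, G.adj_comm]

theorem vicinalLE_total (hG : IsThreshold G) (u v : V) : G.VicinalLE u v ∨ G.VicinalLE v u := by
  by_contra! ⟨huv, hvu⟩
  obtain ⟨a, hua, hav⟩ := Set.not_subset.mp huv
  obtain ⟨b, hvb, hbu⟩ := Set.not_subset.mp hvu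
  simp only [Set.mem_insert_iff, mem_neighborSet, not_or] at hua hvb hav hbu
  exact (hG.adj_or_adj hua hvb hav.1 hbu.1).elim hav.2 hbu.2

theorem exists_universal_or_isolated [Finite V] [Nonempty V] (hG : IsThreshold G) :
    ∃ v, (∀ u ≠ v, G.Adj v u) ∨ ∀ u, ¬ G.Adj v u := by
  obtain ⟨v, hv⟩ := exists_forall_vicinalLE hG.vicinalLE_total
  by_cases huniv : ∀ u ≠ v, G.Adj v u
  · exact ⟨v, Or.inl huniv⟩
  push Not at huniv
  obtain ⟨x, hxv, hvx⟩ := huniv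
  refine ⟨x, Or.inr fun y hxy => ?_⟩
  rcases hv x hxy with rfl | (hvy : G.Adj v y)
  · exact hvx hxy.symm
  · rcases hv y hxy.symm with rfl | (hvx' : G.Adj v x)
    · exact hxv rfl
    · exact hvx hvx'

theorem exists_isCreationSequence [Finite V] {n : ℕ} (hG : IsThreshold G) (hV : Nat.card V = n) :
    ∃ e : Fin n ≃ V, G.IsCreationSequence e := by
  classical
  induction n generalizing V with
  | zero =>
    have : IsEmpty V := Finite.card_eq_zero_iff.mp hV
    exact ⟨Equiv.equivOfIsEmpty _ _, fun i => i.elim0⟩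
  | succ n ih =>
    have : Nonempty V := Finite.card_pos_iff.mp (by omega)
    obtain ⟨v, hv⟩ := hG.exists_universal_or_isolated
    have hcard : Nat.card {u // u ≠ v} = n := by
      have := Nat.card_congr (Equiv.optionSubtypeNe v)
      rw [Finite.card_option] at this
      omega
    obtain ⟨e, he⟩ := ih (hG.of_embedding (Embedding.comap _ G)) hcard
    exact ⟨_, he.snoc hv⟩

end IsThreshold

theorem stmt9_general {n : ℕ} (G : SimpleGraph (Fin n)) :
    IsThreshold G ↔
      ∃ e : Fin n ≃ Fin n, ∀ i : Fin n,
        (∀ j : Fin n, j < i → G.Adj (e i) (e j)) ∨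
        (∀ j : Fin n, j < i → ¬ G.Adj (e i) (e j)) :=
  ⟨fun hG => hG.exists_isCreationSequence (Nat.card_fin n),
    fun ⟨_, he⟩ => IsCreationSequence.isThreshold he⟩

theorem stmt9 {n : ℕ} (hn : 0 < n) (G : SimpleGraph (Fin n)) :
    IsThreshold G ↔
      ∃ e : Fin n ≃ Fin n, ∀ i : Fin n,
        (∀ j : Fin n, j < i → G.Adj (e i) (e j)) ∨
        (∀ j : Fin n, j < i → ¬ G.Adj (e i) (e j)) :=
  stmt9_general G
end

section
/- A finite simple graph G is a threshold graph if and only if for every three distinct vertices i, j, k of G: if deg(i) ≥ deg(j) and jk is an edge, then ik is an edge. -/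
open SimpleGraph

/-!
Call distinct vertices `a, b, c, d` an alternating 4-cycle if `ab` and `cd` are edges while `bc`
and `da` are not. According to which of the chords `ac`, `bd` are edges, such a configuration
induces `2K₂`, `P₄` or `C₄`, and each of these three graphs contains one; so threshold graphs are
exactly the graphs without alternating 4-cycles. The degree condition rules them out, since
whichever of `a`, `c` has the larger degree must then be adjacent to the other one's neighbour.
Conversely, if `deg j ≤ deg i`, `jk` is an edge and `ik` is not, then counting neighbourhoods
shows that `i` has a neighbour `l ≠ j` outside the neighbourhood of `j`, and `l, i, k, j` is an
alternating 4-cycle.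
-/

namespace SimpleGraph

variable {V : Type*} {G : SimpleGraph V}

variable (G) in
def HasAlternatingCycle : Prop :=
  ∃ a b c d : V, a ≠ c ∧ b ≠ d ∧ b ≠ c ∧ d ≠ a ∧
    G.Adj a b ∧ ¬G.Adj b c ∧ G.Adj c d ∧ ¬G.Adj d a

theorem HasAlternatingCycle.map {W : Type*} {H : SimpleGraph W} (f : H ↪g G)
    (h : H.HasAlternatingCycle) : G.HasAlternatingCycle := by
  obtain ⟨a, b, c, d, hac, hbd, hbc, hda, hab, hbc', hcd, hda'⟩ := h
  exact ⟨f a, f b, f c, f d, f.injective.ne hac, f.injective.ne hbd, f.injective.ne hbc,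
    f.injective.ne hda, f.map_rel_iff.2 hab, mt f.map_rel_iff.1 hbc', f.map_rel_iff.2 hcd,
    mt f.map_rel_iff.1 hda'⟩

theorem twoK2_hasAlternatingCycle : twoK2.HasAlternatingCycle :=
  ⟨0, 1, 2, 3, by simp [twoK2]⟩

theorem cycleGraph_four_hasAlternatingCycle : (cycleGraph 4).HasAlternatingCycle :=
  ⟨0, 1, 3, 2, by decide⟩

theorem pathGraph_four_hasAlternatingCycle : (pathGraph 4).HasAlternatingCycle :=
  ⟨0, 1, 3, 2, by simp [pathGraph_adj]⟩

theorem injective_vecCons_four {a b c d : V} (h : [a, b, c, d].Nodup) :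
    Function.Injective ![a, b, c, d] :=
  List.nodup_ofFn.1 (by simpa [List.ofFn_succ] using h)

theorem nonempty_twoK2_embedding {a b c d : V} (hac : a ≠ c) (had : a ≠ d) (hbc : b ≠ c)
    (hbd : b ≠ d) (hab : G.Adj a b) (hcd : G.Adj c d) (hac' : ¬G.Adj a c) (had' : ¬G.Adj a d)
    (hbc' : ¬G.Adj b c) (hbd' : ¬G.Adj b d) : Nonempty (twoK2 ↪g G) := by
  refine ⟨⟨⟨![a, b, c, d], injective_vecCons_four (by simp [*, hab.ne, hcd.ne])⟩, @fun x y => ?_⟩⟩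
  fin_cases x <;> fin_cases y <;>
    simp [*, twoK2, G.adj_comm b a, G.adj_comm c a, G.adj_comm d a, G.adj_comm c b,
      G.adj_comm d b, G.adj_comm d c]

theorem nonempty_cycleGraph_four_embedding {a b c d : V} (hac : a ≠ c) (hbd : b ≠ d)
    (hab : G.Adj a b) (hbc : G.Adj b c) (hcd : G.Adj c d) (hda : G.Adj d a)
    (hac' : ¬G.Adj a c) (hbd' : ¬G.Adj b d) : Nonempty (cycleGraph 4 ↪g G) := by
  refine ⟨⟨⟨![a, b, c, d], injective_vecCons_four (by simp [*, hab.ne, hbc.ne, hcd.ne, hda.ne'])⟩,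
    @fun x y => ?_⟩⟩
  fin_cases x <;> fin_cases y <;>
    simp +decide [*, G.adj_comm b a, G.adj_comm c a, G.adj_comm a d, G.adj_comm c b,
      G.adj_comm d b, G.adj_comm d c]

theorem nonempty_pathGraph_four_embedding {a b c d : V} (hac : a ≠ c) (had : a ≠ d)
    (hbd : b ≠ d) (hab : G.Adj a b) (hbc : G.Adj b c) (hcd : G.Adj c d)
    (hac' : ¬G.Adj a c) (had' : ¬G.Adj a d) (hbd' : ¬G.Adj b d) :
    Nonempty (pathGraph 4 ↪g G) := by
  refine ⟨⟨⟨![a, b, c, d], injective_vecCons_four (by simp [*, hab.ne, hbc.ne, hcd.ne])⟩,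
    @fun x y => ?_⟩⟩
  fin_cases x <;> fin_cases y <;>
    simp [*, pathGraph_adj, G.adj_comm b a, G.adj_comm c a, G.adj_comm d a, G.adj_comm c b,
      G.adj_comm d b, G.adj_comm d c]

theorem HasAlternatingCycle.nonempty_embedding (h : G.HasAlternatingCycle) :
    Nonempty (twoK2 ↪g G) ∨ Nonempty (cycleGraph 4 ↪g G) ∨ Nonempty (pathGraph 4 ↪g G) := by
  obtain ⟨a, b, c, d, hac, hbd, hbc, hda, hab, hbc', hcd, hda'⟩ := h
  have had' : ¬G.Adj a d := fun h => hda' h.symm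
  by_cases hac' : G.Adj a c <;> by_cases hbd' : G.Adj b d
  · exact .inr <| .inl <| nonempty_cycleGraph_four_embedding hda.symm hbc hab hbd' hcd.symm
      hac'.symm had' hbc'
  · exact .inr <| .inr <| nonempty_pathGraph_four_embedding hbc hbd hda.symm hab.symm hac' hcd
      hbc' hbd' had'
  · exact .inr <| .inr <| nonempty_pathGraph_four_embedding hda.symm hac hbc hab hbd' hcd.symm
      had' hac' hbc'
  · exact .inl <| nonempty_twoK2_embedding hac hda.symm hbc hbd hab hcd hac' had' hbc' hbd'

section Degree

variable [G.LocallyFinite] [DecidableEq V]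

theorem exists_adj_not_adj_of_degree_le {i j k : V} (hik : i ≠ k)
    (hdeg : G.degree j ≤ G.degree i) (hjk : G.Adj j k) (hik' : ¬G.Adj i k) :
    ∃ l, l ≠ j ∧ G.Adj i l ∧ ¬G.Adj j l := by
  by_contra! h
  have hsub : insert k ((G.neighborFinset i).erase j) ⊆ (G.neighborFinset j).erase i := by
    intro l hl
    simp only [Finset.mem_insert, Finset.mem_erase, mem_neighborFinset] at hl ⊢
    rcases hl with rfl | ⟨hlj, hil⟩
    · exact ⟨hik.symm, hjk⟩
    · exact ⟨hil.ne', h l hlj hil⟩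
  have hcard := Finset.card_le_card hsub
  rw [Finset.card_insert_of_notMem (by simp [hik'])] at hcard
  by_cases hij : G.Adj i j
  · have hi := Finset.card_erase_add_one ((G.mem_neighborFinset i j).2 hij)
    have hj := Finset.card_erase_add_one ((G.mem_neighborFinset j i).2 hij.symm)
    rw [card_neighborFinset_eq_degree] at hi hj
    omega
  · rw [Finset.erase_eq_of_notMem (by simpa), Finset.erase_eq_of_notMem (by simpa [G.adj_comm]),
      card_neighborFinset_eq_degree, card_neighborFinset_eq_degree] at hcard
    omega

theorem forall_adj_of_degree_le_iff_not_hasAlternatingCycle :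
    (∀ i j k : V, i ≠ j → j ≠ k → i ≠ k → G.degree j ≤ G.degree i → G.Adj j k → G.Adj i k) ↔
      ¬G.HasAlternatingCycle := by
  constructor
  · rintro h ⟨a, b, c, d, hac, hbd, hbc, hda, hab, hbc', hcd, hda'⟩
    rcases le_total (G.degree a) (G.degree c) with hdeg | hdeg
    · exact hbc' (h c a b hac.symm hab.ne hbc.symm hdeg hab).symm
    · exact hda' (h a c d hac hcd.ne hda.symm hdeg hcd).symm
  · intro h i j k hij _ hik hdeg hjk
    by_contra hik'
    obtain ⟨l, hlj, hil, hjl⟩ := exists_adj_not_adj_of_degree_le hik hdeg hjk hik'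
    exact h ⟨l, i, k, j, fun hlk => hik' (hlk ▸ hil), hij, hik, hlj.symm, hil.symm, hik',
      hjk.symm, hjl⟩

end Degree

end SimpleGraph

theorem isThreshold_iff_not_hasAlternatingCycle {V : Type} {G : SimpleGraph V} :
    IsThreshold G ↔ ¬G.HasAlternatingCycle := by
  refine ⟨fun ⟨h2K2, hC4, hP4⟩ h => ?_, fun h => ⟨?_, ?_, ?_⟩⟩
  · rcases h.nonempty_embedding with h | h | h
    exacts [not_isEmpty_iff.2 h h2K2, not_isEmpty_iff.2 h hC4, not_isEmpty_iff.2 h hP4]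
  · exact ⟨fun f => h (twoK2_hasAlternatingCycle.map f)⟩
  · exact ⟨fun f => h (cycleGraph_four_hasAlternatingCycle.map f)⟩
  · exact ⟨fun f => h (pathGraph_four_hasAlternatingCycle.map f)⟩

theorem deg_eq_degree {n : ℕ} (G : SimpleGraph (Fin n)) (v : Fin n)
    [Fintype (G.neighborSet v)] : deg G v = G.degree v := by
  unfold deg
  congr!

theorem stmt10 {n : ℕ} (G : SimpleGraph (Fin n)) :
    IsThreshold G ↔
      ∀ i j k : Fin n, i ≠ j → j ≠ k → i ≠ k →
        deg G j ≤ deg G i → G.Adj j k → G.Adj i k := by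
  classical
  simp only [deg_eq_degree]
  rw [isThreshold_iff_not_hasAlternatingCycle,
    forall_adj_of_degree_le_iff_not_hasAlternatingCycle]
end

section
/- If G is a connected graph maximizing the A_α-spectral radius among all connected graphs of order n and size m (with m ≥ n-1 fixed and 0 ≤ α < 1), then G is a threshold graph. -/
open SimpleGraph

open Matrix

/-!
Let `x` be a positive eigenvector of `A_α(G)` for `ρ`; it exists because `G` is connected and
`α < 1`. Suppose `b ~ v`, `b ≁ u` and `x v ≤ x u`. Rotating the edge `bv` to `bu` raises the
quadratic form `xᵀ A_α x` by `(x u - x v) (α (x u + x v) + 2 (1 - α) x b) ≥ 0` and strictly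
raises the `u`-entry of `A_α x`, so the rotated graph has a larger spectral radius. Since `G` is
extremal, the rotation must disconnect `G`; hence `b ~ u` whenever `u` still reaches `v` after
deleting `bv`. On a path `a - v - u - b` (inside an induced `P₄` or `C₄`) this produces a chord
`au` or `vb`, and on two independent edges (an induced `2K₂`) an edge joining them.
-/

namespace IsMaxEigenvalue

variable {n : ℕ} {M : Matrix (Fin n) (Fin n) ℝ} {q : ℝ}

theorem posSemidef_smul_one_sub (hM : M.IsHermitian) (hq : IsMaxEigenvalue M q) :
    (q • (1 : Matrix (Fin n) (Fin n) ℝ) - M).PosSemidef := by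
  have hN : (q • (1 : Matrix (Fin n) (Fin n) ℝ) - M).IsHermitian :=
    (isHermitian_one.smul (IsSelfAdjoint.all q)).sub hM
  refine hN.posSemidef_iff_eigenvalues_nonneg.2 fun i => show 0 ≤ _ from ?_
  have hv := hN.mulVec_eigenvectorBasis i
  set v : Fin n → ℝ := WithLp.ofLp (hN.eigenvectorBasis i)
  have hMv : M *ᵥ v = (q - hN.eigenvalues i) • v := by
    rw [sub_smul, ← hv, sub_mulVec, smul_mulVec, one_mulVec, sub_sub_cancel]
  have hv0 : v ≠ 0 := (WithLp.ofLp_eq_zero 2).ne.2 (hN.eigenvectorBasis.orthonormal.ne_zero i)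
  linarith [hq.2 _ v hv0 hMv]

theorem dotProduct_mulVec_le (hM : M.IsHermitian) (hq : IsMaxEigenvalue M q) (x : Fin n → ℝ) :
    x ⬝ᵥ M *ᵥ x ≤ q * (x ⬝ᵥ x) := by
  have h := (hq.posSemidef_smul_one_sub hM).dotProduct_mulVec_nonneg x
  rw [star_trivial, sub_mulVec, smul_mulVec, one_mulVec, dotProduct_sub, dotProduct_smul,
    smul_eq_mul] at h
  linarith

theorem mulVec_eq_of_dotProduct_mulVec_eq (hM : M.IsHermitian) (hq : IsMaxEigenvalue M q)
    {x : Fin n → ℝ} (h : x ⬝ᵥ M *ᵥ x = q * (x ⬝ᵥ x)) : M *ᵥ x = q • x := by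
  have h0 : star x ⬝ᵥ (q • (1 : Matrix (Fin n) (Fin n) ℝ) - M) *ᵥ x = 0 := by
    rw [star_trivial, sub_mulVec, smul_mulVec, one_mulVec, dotProduct_sub, dotProduct_smul,
      smul_eq_mul, h, sub_self]
  have := ((hq.posSemidef_smul_one_sub hM).dotProduct_mulVec_zero_iff x).1 h0
  rw [sub_mulVec, smul_mulVec, one_mulVec, sub_eq_zero] at this
  exact this.symm

end IsMaxEigenvalue

theorem Matrix.IsHermitian.exists_isMaxEigenvalue {n : ℕ} [NeZero n]
    {M : Matrix (Fin n) (Fin n) ℝ} (hM : M.IsHermitian) : ∃ q, IsMaxEigenvalue M q := by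
  obtain ⟨i₀, -, hi₀⟩ := Finset.univ.exists_max_image hM.eigenvalues Finset.univ_nonempty
  refine ⟨hM.eigenvalues i₀, ⟨WithLp.ofLp (hM.eigenvectorBasis i₀),
    (WithLp.ofLp_eq_zero 2).ne.2 (hM.eigenvectorBasis.orthonormal.ne_zero i₀),
    hM.mulVec_eigenvectorBasis i₀⟩, fun μ x hx hMx => ?_⟩
  have hμ : μ ∈ spectrum ℝ M := by
    rw [← Matrix.spectrum_toLin']
    refine (Module.End.hasEigenvalue_of_hasEigenvector (x := x) ⟨?_, hx⟩).mem_spectrum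
    simpa [Module.End.mem_eigenspace_iff] using hMx
  obtain ⟨i, rfl⟩ := hM.spectrum_real_eq_range_eigenvalues ▸ hμ
  exact hi₀ i (Finset.mem_univ i)

namespace SimpleGraph

variable {V : Type*} {G : SimpleGraph V}

theorem Preconnected.forall_of_adj_imp (hG : G.Preconnected) {P : V → Prop}
    (hP : ∀ i j, G.Adj i j → P i → P j) {i : V} (hi : P i) (j : V) : P j := by
  obtain ⟨w⟩ := hG i j
  induction w with
  | nil => exact hi
  | cons hadj _ ih => exact ih (hP _ _ hadj hi)

theorem Reachable.deleteEdges_or {a v b : V} (h : G.Reachable a v) :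
    (G.deleteEdges {s(v, b)}).Reachable a v ∨ (G.deleteEdges {s(v, b)}).Reachable a b := by
  classical
  obtain ⟨p, hp⟩ := h.exists_isPath
  by_cases hvb : s(v, b) ∈ p.edges
  · have hb := p.snd_mem_support_of_mem_edges hvb
    have hv : v ∉ (p.takeUntil b hb).support :=
      Walk.endpoint_notMem_support_takeUntil hp hb (p.adj_of_mem_edges hvb).ne
    refine Or.inr ⟨(p.takeUntil b hb).toDeleteEdges {s(v, b)} fun e he hev => hv ?_⟩
    rw [Set.mem_singleton_iff.1 hev] at he
    exact (p.takeUntil b hb).fst_mem_support_of_mem_edges he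
  · exact Or.inl ⟨p.toDeleteEdges {s(v, b)} fun e he hev =>
      hvb (Set.mem_singleton_iff.1 hev ▸ he)⟩

def rotateEdge (G : SimpleGraph V) (b v u : V) : SimpleGraph V :=
  G.deleteEdges {s(b, v)} ⊔ edge b u

variable {b v u : V}

theorem Connected.rotateEdge (hG : G.Connected) (hne : b ≠ u)
    (hreach : (G.deleteEdges {s(b, v)}).Reachable u v) : (G.rotateEdge b v u).Connected := by
  have hle : G.deleteEdges {s(b, v)} ≤ G.rotateEdge b v u := le_sup_left
  have hbu : (G.rotateEdge b v u).Adj b u :=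
    Or.inr ((edge_adj _ _ _ _).2 ⟨Or.inl ⟨rfl, rfl⟩, hne⟩)
  have hstep : ∀ i j, G.Adj i j → (G.rotateEdge b v u).Reachable i j := by
    intro i j hij
    by_cases he : s(i, j) = s(b, v)
    · have hbv' : (G.rotateEdge b v u).Reachable b v := hbu.reachable.trans (hreach.mono hle)
      rcases Sym2.eq_iff.1 he with ⟨rfl, rfl⟩ | ⟨rfl, rfl⟩
      · exact hbv'
      · exact hbv'.symm
    · exact (hle ((deleteEdges_adj ..).2 ⟨hij, he⟩)).reachable
  refine (connected_iff _).2 ⟨fun i j => ?_, hG.nonempty⟩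
  exact hG.preconnected.forall_of_adj_imp (fun j k hjk hij => hij.trans (hstep j k hjk))
    (Reachable.refl i) j

theorem edgeSet_rotateEdge (hne : b ≠ u) :
    (G.rotateEdge b v u).edgeSet = insert s(b, u) (G.edgeSet \ {s(b, v)}) := by
  rw [rotateEdge, edgeSet_sup, edgeSet_deleteEdges, edgeSet_edge_of_ne hne, Set.union_singleton]

theorem ncard_edgeSet_rotateEdge [Finite V] (hbv : G.Adj b v) (hbu : ¬G.Adj b u) (hne : b ≠ u) :
    (G.rotateEdge b v u).edgeSet.ncard = G.edgeSet.ncard := by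
  rw [edgeSet_rotateEdge hne, Set.ncard_insert_of_notMem (fun h => hbu h.1) (Set.toFinite _),
    Set.ncard_sdiff_singleton_add_one (s := G.edgeSet) hbv]

theorem ite_adj_rotateEdge {R : Type*} [AddCommGroup R] [DecidableEq V] [DecidableRel G.Adj]
    [DecidableRel (G.rotateEdge b v u).Adj] (hbv : G.Adj b v) (hbu : ¬G.Adj b u)
    (hne : b ≠ u) (f : V → V → R) (i j : V) :
    (if (G.rotateEdge b v u).Adj i j then f i j else 0) =
      (if G.Adj i j then f i j else 0) - (if s(i, j) = s(b, v) then f i j else 0) +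
        (if s(i, j) = s(b, u) then f i j else 0) := by
  have hvu : s(b, v) ≠ s(b, u) := fun h => hbu (Sym2.congr_right.1 h ▸ hbv)
  simp only [← mem_edgeSet, edgeSet_rotateEdge hne] at hbv hbu ⊢
  generalize s(i, j) = e
  by_cases h1 : e = s(b, v)
  · simp [h1, hbv, hvu]
  · by_cases h2 : e = s(b, u)
    · simp [h2, hbu, hvu.symm]
    · simp [h1, h2]

theorem sum_sum_ite_sym2_eq {R : Type*} [AddCommMonoid R] [Fintype V] [DecidableEq V] {a c : V}
    (hac : a ≠ c) (f : V → V → R) :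
    ∑ i, ∑ j, (if s(i, j) = s(a, c) then f i j else 0) = f a c + f c a := by
  have hsplit : ∀ i j, (if s(i, j) = s(a, c) then f i j else 0) =
      (if i = a ∧ j = c then f i j else 0) + (if i = c ∧ j = a then f i j else 0) := by
    intro i j
    simp only [Sym2.eq_iff]
    by_cases h : i = a ∧ j = c
    · simp [h, hac]
    · simp [h]
  simp_rw [hsplit, Finset.sum_add_distrib, ite_and]
  simp

end SimpleGraph

section Aalpha

variable {n : ℕ} (G : SimpleGraph (Fin n)) (α : ℝ)

theorem Aalpha_eq [DecidableRel G.Adj] :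
    Aalpha G α = α • diagonal (fun v => (G.degree v : ℝ)) + (1 - α) • G.adjMatrix ℝ := by
  unfold Aalpha
  congr!

theorem isHermitian_Aalpha : (Aalpha G α).IsHermitian := by
  classical
  rw [Aalpha_eq]
  exact ((isHermitian_diagonal_of_self_adjoint _ (IsSelfAdjoint.all _)).smul
    (IsSelfAdjoint.all α)).add ((G.isHermitian_adjMatrix ℝ).smul (IsSelfAdjoint.all _))

theorem Aalpha_mulVec_apply [DecidableRel G.Adj] (x : Fin n → ℝ) (i : Fin n) :
    (Aalpha G α *ᵥ x) i = ∑ j, if G.Adj i j then α * x i + (1 - α) * x j else 0 := by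
  rw [Aalpha_eq, add_mulVec, smul_mulVec, smul_mulVec, Pi.add_apply, Pi.smul_apply,
    Pi.smul_apply, mulVec_diagonal, adjMatrix_mulVec_apply, ← Finset.sum_filter,
    ← neighborFinset_eq_filter, Finset.sum_add_distrib, Finset.sum_const, ← Finset.mul_sum,
    card_neighborFinset_eq_degree, nsmul_eq_mul, smul_eq_mul, smul_eq_mul]
  ring

theorem dotProduct_Aalpha_mulVec [DecidableRel G.Adj] (x : Fin n → ℝ) :
    x ⬝ᵥ Aalpha G α *ᵥ x =
      ∑ i, ∑ j, if G.Adj i j then x i * (α * x i + (1 - α) * x j) else 0 := by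
  simp only [dotProduct, Aalpha_mulVec_apply, Finset.mul_sum, mul_ite, mul_zero]

end Aalpha

section Perron

variable {n : ℕ} {G : SimpleGraph (Fin n)} {α ρ : ℝ}

theorem dotProduct_Aalpha_mulVec_le_abs (hα1 : α ≤ 1) (x : Fin n → ℝ) :
    x ⬝ᵥ Aalpha G α *ᵥ x ≤ |x| ⬝ᵥ Aalpha G α *ᵥ |x| := by
  classical
  rw [dotProduct_Aalpha_mulVec, dotProduct_Aalpha_mulVec]
  refine Finset.sum_le_sum fun i _ => Finset.sum_le_sum fun j _ => ?_
  split_ifs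
  · simp only [Pi.abs_apply]
    nlinarith [abs_mul_abs_self (x i), le_abs_self (x i * x j), abs_mul (x i) (x j),
      mul_le_mul_of_nonneg_left (le_abs_self (x i * x j)) (sub_nonneg.2 hα1)]
  · rfl

theorem IsMaxEigenvalue.exists_pos_eigenvector_Aalpha (hα1 : α < 1)
    (hG : G.Connected) (hρ : IsMaxEigenvalue (Aalpha G α) ρ) :
    ∃ x : Fin n → ℝ, (∀ i, 0 < x i) ∧ Aalpha G α *ᵥ x = ρ • x := by
  classical
  obtain ⟨x, hx0, hx⟩ := hρ.1
  have hA := isHermitian_Aalpha G α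
  have habs : |x| ⬝ᵥ |x| = x ⬝ᵥ x :=
    Finset.sum_congr rfl fun i _ => abs_mul_abs_self (x i)
  have heig : Aalpha G α *ᵥ |x| = ρ • |x| := by
    refine hρ.mulVec_eq_of_dotProduct_mulVec_eq hA (le_antisymm
      (hρ.dotProduct_mulVec_le hA _) ?_)
    calc ρ * (|x| ⬝ᵥ |x|) = x ⬝ᵥ Aalpha G α *ᵥ x := by
          rw [habs, hx, dotProduct_smul, smul_eq_mul]
      _ ≤ |x| ⬝ᵥ Aalpha G α *ᵥ |x| := dotProduct_Aalpha_mulVec_le_abs hα1.le x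
  have hspread : ∀ i j, G.Adj i j → |x| i = 0 → |x| j = 0 := by
    intro i j hij hi
    have hrow := congrFun heig i
    rw [Aalpha_mulVec_apply, Pi.smul_apply, hi, smul_zero] at hrow
    have hterm := (Finset.sum_eq_zero_iff_of_nonneg fun k _ => ?_).1 hrow j
      (Finset.mem_univ j)
    · rw [if_pos hij, mul_zero, zero_add] at hterm
      exact (mul_eq_zero.1 hterm).resolve_left (sub_ne_zero.2 hα1.ne')
    · split_ifs
      · exact add_nonneg (by rw [mul_zero]) (mul_nonneg (sub_nonneg.2 hα1.le) (abs_nonneg _))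
      · rfl
  refine ⟨|x|, fun i => (abs_nonneg (x i)).lt_of_ne fun hi => hx0 ?_, heig⟩
  funext j
  exact abs_eq_zero.1 (hG.preconnected.forall_of_adj_imp hspread hi.symm j)

end Perron

section Rotation

variable {n : ℕ} {G : SimpleGraph (Fin n)} {α : ℝ} {b v u : Fin n}

theorem dotProduct_Aalpha_rotateEdge (hbv : G.Adj b v) (hbu : ¬G.Adj b u) (hne : b ≠ u)
    (x : Fin n → ℝ) :
    x ⬝ᵥ Aalpha (G.rotateEdge b v u) α *ᵥ x =
      x ⬝ᵥ Aalpha G α *ᵥ x + (x u - x v) * (α * (x u + x v) + 2 * (1 - α) * x b) := by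
  classical
  rw [dotProduct_Aalpha_mulVec, dotProduct_Aalpha_mulVec]
  simp_rw [ite_adj_rotateEdge hbv hbu hne fun i j => x i * (α * x i + (1 - α) * x j),
    Finset.sum_add_distrib, Finset.sum_sub_distrib]
  rw [sum_sum_ite_sym2_eq hbv.ne, sum_sum_ite_sym2_eq hne]
  ring

theorem Aalpha_rotateEdge_mulVec_apply (hbv : G.Adj b v) (hbu : ¬G.Adj b u) (hne : b ≠ u)
    (x : Fin n → ℝ) :
    (Aalpha (G.rotateEdge b v u) α *ᵥ x) u =
      (Aalpha G α *ᵥ x) u + (α * x u + (1 - α) * x b) := by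
  classical
  have hvu : u ≠ v := fun h => hbu (h ▸ hbv)
  rw [Aalpha_mulVec_apply, Aalpha_mulVec_apply]
  simp_rw [ite_adj_rotateEdge hbv hbu hne fun i j => α * x i + (1 - α) * x j,
    Finset.sum_add_distrib, Finset.sum_sub_distrib]
  simp [hne.symm, hvu]

theorem lt_of_isMaxEigenvalue_rotateEdge (hα0 : 0 ≤ α) (hα1 : α ≤ 1) {ρ ρ' : ℝ}
    {x : Fin n → ℝ} (hx : ∀ i, 0 < x i) (hxe : Aalpha G α *ᵥ x = ρ • x) (hbv : G.Adj b v)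
    (hbu : ¬G.Adj b u) (hne : b ≠ u) (hle : x v ≤ x u)
    (hρ' : IsMaxEigenvalue (Aalpha (G.rotateEdge b v u) α) ρ') : ρ < ρ' := by
  have hH := isHermitian_Aalpha (G.rotateEdge b v u) α
  have hgain : 0 ≤ (x u - x v) * (α * (x u + x v) + 2 * (1 - α) * x b) := by
    have := hx u; have := hx v; have := hx b
    exact mul_nonneg (sub_nonneg.2 hle) (by nlinarith)
  have hxx : 0 < x ⬝ᵥ x := Finset.sum_pos (fun i _ => mul_self_pos.2 (hx i).ne')
    ⟨u, Finset.mem_univ u⟩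
  have hQ : ρ * (x ⬝ᵥ x) ≤ x ⬝ᵥ Aalpha (G.rotateEdge b v u) α *ᵥ x := by
    rw [dotProduct_Aalpha_rotateEdge hbv hbu hne, hxe, dotProduct_smul, smul_eq_mul]
    linarith
  have hle' := hρ'.dotProduct_mulVec_le hH x
  refine lt_of_le_of_ne (le_of_mul_le_mul_right (hQ.trans hle') hxx) fun hρρ' => ?_
  -- equality would make `x` an eigenvector of the rotated graph too, but its `u`-entry grew
  subst hρρ'
  have hrow := congrFun (hρ'.mulVec_eq_of_dotProduct_mulVec_eq hH (le_antisymm hle' hQ)) u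
  rw [Aalpha_rotateEdge_mulVec_apply hbv hbu hne, hxe] at hrow
  simp only [Pi.smul_apply, smul_eq_mul, add_eq_left] at hrow
  rcases le_total (x u) (x b) with h | h
  · nlinarith [hx u, mul_nonneg (sub_nonneg.2 hα1) (sub_nonneg.2 h)]
  · nlinarith [hx b, mul_nonneg hα0 (sub_nonneg.2 h)]

end Rotation

namespace SimpleGraph

variable {V β : Type*} [LinearOrder β] {G : SimpleGraph V} {x : V → β}

/-- Every rotation of an edge `bv` to `bu` with `x v ≤ x u` that visibly keeps `G` connected
(`u` still reaches `v` without `bv`) is trivial: `bu` is already an edge. -/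
def IsRotationMaximal (G : SimpleGraph V) (x : V → β) : Prop :=
  ∀ ⦃b v u⦄, G.Adj b v → b ≠ u → x v ≤ x u → (G.deleteEdges {s(b, v)}).Reachable u v →
    G.Adj b u

namespace IsRotationMaximal

theorem adj_of_adj_of_adj (h : G.IsRotationMaximal x) {b v u : V} (huv : G.Adj u v)
    (hbv : G.Adj b v) (hne : b ≠ u) (hle : x v ≤ x u) : G.Adj b u :=
  h hbv hne hle ((deleteEdges_adj ..).2
    ⟨huv, fun he => hne (Sym2.congr_left.1 (Set.mem_singleton_iff.1 he)).symm⟩).reachable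

theorem adj_or_adj_of_path (h : G.IsRotationMaximal x) {a v u b : V} (hav : G.Adj a v)
    (hvu : G.Adj v u) (hub : G.Adj u b) (hau : a ≠ u) (hvb : v ≠ b) :
    G.Adj a u ∨ G.Adj v b := by
  rcases le_total (x v) (x u) with hle | hle
  · exact Or.inl (h.adj_of_adj_of_adj hvu.symm hav hau hle)
  · exact Or.inr (h.adj_of_adj_of_adj hvu hub.symm hvb.symm hle).symm

theorem adj_or_adj_of_le (h : G.IsRotationMaximal x) (hG : G.Preconnected) {a b u : V}
    (hab : G.Adj a b) (hua : u ≠ a) (hub : u ≠ b) (ha : x a ≤ x u) (hb : x b ≤ x u) :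
    G.Adj a u ∨ G.Adj b u := by
  rcases (hG u b).deleteEdges_or (b := a) with hr | hr
  · exact Or.inl (h hab hua.symm hb (by rwa [Sym2.eq_swap]))
  · exact Or.inr (h hab.symm hub.symm ha hr)

theorem adj_across_of_adj_of_adj (h : G.IsRotationMaximal x) (hG : G.Preconnected)
    {a b c d : V} (hab : G.Adj a b) (hcd : G.Adj c d) (hac : a ≠ c) (had : a ≠ d)
    (hbc : b ≠ c) (hbd : b ≠ d) : G.Adj a c ∨ G.Adj a d ∨ G.Adj b c ∨ G.Adj b d := by
  wlog hmax : max (x a) (x b) ≤ max (x c) (x d) generalizing a b c d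
  · rcases this hcd hab hac.symm hbc.symm had.symm hbd.symm (le_of_not_ge hmax) with
      h' | h' | h' | h'
    · exact Or.inl h'.symm
    · exact Or.inr (Or.inr (Or.inl h'.symm))
    · exact Or.inr (Or.inl h'.symm)
    · exact Or.inr (Or.inr (Or.inr h'.symm))
  have ha := (le_max_left (x a) (x b)).trans hmax
  have hb := (le_max_right (x a) (x b)).trans hmax
  rcases max_choice (x c) (x d) with hu | hu
  · rcases h.adj_or_adj_of_le hG hab hac.symm hbc.symm (hu ▸ ha) (hu ▸ hb) with h' | h'
    · exact Or.inl h'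
    · exact Or.inr (Or.inr (Or.inl h'))
  · rcases h.adj_or_adj_of_le hG hab had.symm hbd.symm (hu ▸ ha) (hu ▸ hb) with h' | h'
    · exact Or.inr (Or.inl h')
    · exact Or.inr (Or.inr (Or.inr h'))

theorem isThreshold {V : Type} {G : SimpleGraph V} {x : V → β} (h : G.IsRotationMaximal x)
    (hG : G.Preconnected) : IsThreshold G := by
  refine ⟨⟨fun f => ?_⟩, ⟨fun f => ?_⟩, ⟨fun f => ?_⟩⟩
  · rcases h.adj_across_of_adj_of_adj hG (f.map_adj_iff.2 (by simp [twoK2] : twoK2.Adj 0 1))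
      (f.map_adj_iff.2 (by simp [twoK2] : twoK2.Adj 2 3)) (f.injective.ne (by decide))
      (f.injective.ne (by decide)) (f.injective.ne (by decide)) (f.injective.ne (by decide))
      with h' | h' | h' | h' <;> simpa [twoK2] using f.map_adj_iff.1 h'
  · rcases h.adj_or_adj_of_path (f.map_adj_iff.2 (by decide : (cycleGraph 4).Adj 0 1))
      (f.map_adj_iff.2 (by decide : (cycleGraph 4).Adj 1 2))
      (f.map_adj_iff.2 (by decide : (cycleGraph 4).Adj 2 3)) (f.injective.ne (by decide))
      (f.injective.ne (by decide)) with h' | h' <;> revert h' <;> rw [f.map_adj_iff] <;> decide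
  · rcases h.adj_or_adj_of_path
      (f.map_adj_iff.2 (by simp [pathGraph_adj] : (pathGraph 4).Adj 0 1))
      (f.map_adj_iff.2 (by simp [pathGraph_adj] : (pathGraph 4).Adj 1 2))
      (f.map_adj_iff.2 (by simp [pathGraph_adj] : (pathGraph 4).Adj 2 3))
      (f.injective.ne (by decide)) (f.injective.ne (by decide)) with h' | h' <;>
      simpa [pathGraph_adj] using f.map_adj_iff.1 h'

end IsRotationMaximal

end SimpleGraph

theorem isRotationMaximal_of_Aalpha_extremal {n : ℕ} {G : SimpleGraph (Fin n)} {α ρ : ℝ}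
    (hα0 : 0 ≤ α) (hα1 : α ≤ 1) (hG : G.Connected)
    (hmax : ∀ H : SimpleGraph (Fin n), H.Connected → H.edgeSet.ncard = G.edgeSet.ncard →
      ∀ ρ' : ℝ, IsMaxEigenvalue (Aalpha H α) ρ' → ρ' ≤ ρ)
    {x : Fin n → ℝ} (hx : ∀ i, 0 < x i) (hxe : Aalpha G α *ᵥ x = ρ • x) :
    G.IsRotationMaximal x := by
  intro b v u hbv hne hle hreach
  by_contra hbu
  have : NeZero n := NeZero.of_pos b.pos
  obtain ⟨ρ', hρ'⟩ := (isHermitian_Aalpha (G.rotateEdge b v u) α).exists_isMaxEigenvalue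
  exact (hmax _ (hG.rotateEdge hne hreach) (ncard_edgeSet_rotateEdge hbv hbu hne) ρ'
    hρ').not_gt (lt_of_isMaxEigenvalue_rotateEdge hα0 hα1 hx hxe hbv hbu hne hle hρ')

theorem stmt11_general {n m : ℕ} (α : ℝ) (hα0 : 0 ≤ α) (hα1 : α < 1)
    (G : SimpleGraph (Fin n)) (hconn : G.Connected) (hcard : G.edgeSet.ncard = m)
    (ρ : ℝ) (hρ : IsMaxEigenvalue (Aalpha G α) ρ)
    (hmax : ∀ H : SimpleGraph (Fin n), H.Connected → H.edgeSet.ncard = m →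
      ∀ ρ' : ℝ, IsMaxEigenvalue (Aalpha H α) ρ' → ρ' ≤ ρ) :
    IsThreshold G := by
  obtain ⟨x, hx, hxe⟩ := hρ.exists_pos_eigenvector_Aalpha hα1 hconn
  have hrot := isRotationMaximal_of_Aalpha_extremal hα0 hα1.le hconn (hcard ▸ hmax) hx hxe
  exact hrot.isThreshold hconn.preconnected

theorem stmt11 {n m : ℕ} (hm : n - 1 ≤ m) (α : ℝ) (hα0 : 0 ≤ α) (hα1 : α < 1)
    (G : SimpleGraph (Fin n)) (hconn : G.Connected) (hcard : G.edgeSet.ncard = m)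
    (ρ : ℝ) (hρ : IsMaxEigenvalue (Aalpha G α) ρ)
    (hmax : ∀ H : SimpleGraph (Fin n), H.Connected → H.edgeSet.ncard = m →
      ∀ ρ' : ℝ, IsMaxEigenvalue (Aalpha H α) ρ' → ρ' ≤ ρ) :
    IsThreshold G :=
  stmt11_general α hα0 hα1 G hconn hcard ρ hρ hmax
end
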